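/- For every positive integer n, the Segre variety P¹ × P¹ × Pⁿ × P^{n+1} is perfect for s = 2(n+1): the tuple (1, 1, n, n+1; 2(n+1); 0,0,0,0) is equiabundant, i.e. 2(n+1)·(2n+4) = 4(n+1)(n+2) = Π of the factor dimensions, and T(1,1,n,n+1; 2(n+1); 0,0,0,0) holds; that is, there exist 2(n+1) points p₁,…,p_{2(n+1)} (pure tensors of nonzero vectors in K² ⊗ K² ⊗ K^{n+1} ⊗ K^{n+2}) such that Σ_j T_{p_j} = K² ⊗ K² ⊗ K^{n+1} ⊗ K^{n+2}, a space of dimension 4(n+1)(n+2). -/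

import Mathlib

open scoped TensorProduct

/-- The subspace `G^i_p = v₁ ⊗ ⋯ ⊗ v_{i-1} ⊗ Vᵢ ⊗ v_{i+1} ⊗ ⋯ ⊗ v_k` of the tensor
space `⨂ᵢ K^{nᵢ+1}` attached to the point `p = v₁ ⊗ ⋯ ⊗ v_k`. -/
noncomputable def segreG (K : Type*) [Field K] {k : ℕ} (n : Fin k → ℕ)
    (v : ∀ i, Fin (n i + 1) → K) (i : Fin k) :
    Submodule K (⨂[K] i, (Fin (n i + 1) → K)) :=
  LinearMap.range ((PiTensorProduct.tprod K).toLinearMap v i)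

/-- The affine tangent space `T_p = Σᵢ v₁ ⊗ ⋯ ⊗ Vᵢ ⊗ ⋯ ⊗ v_k` to the Segre variety at
`p = v₁ ⊗ ⋯ ⊗ v_k`. -/
noncomputable def segreTangent (K : Type*) [Field K] {k : ℕ} (n : Fin k → ℕ)
    (v : ∀ i, Fin (n i + 1) → K) : Submodule K (⨂[K] i, (Fin (n i + 1) → K)) :=
  ⨆ i, segreG K n v i

/-- The statement `T(n₁,…,n_k; s; a₁,…,a_k)` of Abo–Ottaviani–Peterson holds:
there are points `p₁,…,p_s` and `q_{i,1},…,q_{i,aᵢ}` (pure tensors of nonzero vectors)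
such that the span of the tangent spaces `T_{p_j}` together with the subspaces
`G^i_{q_{i,l}}` has the expected (maximal possible) dimension
`min (s(1 + Σ nᵢ) + Σ aᵢ(nᵢ+1)) (Π (nᵢ+1))`. -/
def THolds (K : Type*) [Field K] {k : ℕ} (n : Fin k → ℕ) (s : ℕ) (a : Fin k → ℕ) : Prop :=
  ∃ (p : Fin s → ∀ i, Fin (n i + 1) → K)
    (q : ∀ i : Fin k, Fin (a i) → ∀ j, Fin (n j + 1) → K),
    (∀ j i, p j i ≠ 0) ∧ (∀ i l j, q i l j ≠ 0) ∧
    Module.finrank K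
      (((⨆ j, segreTangent K n (p j)) ⊔ (⨆ i, ⨆ l, segreG K n (q i l) i))
        : Submodule K (⨂[K] i, (Fin (n i + 1) → K)))
      = min (s * (1 + ∑ i, n i) + ∑ i, a i * (n i + 1)) (∏ i, (n i + 1))

/-- The statement `T(n₁,…,n_k; s; a₁,…,a_k)` fails: every choice of points gives a span
of dimension strictly smaller than the expected dimension. -/
def TFails (K : Type*) [Field K] {k : ℕ} (n : Fin k → ℕ) (s : ℕ) (a : Fin k → ℕ) : Prop :=
  ∀ (p : Fin s → ∀ i, Fin (n i + 1) → K)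
    (q : ∀ i : Fin k, Fin (a i) → ∀ j, Fin (n j + 1) → K),
    (∀ j i, p j i ≠ 0) → (∀ i l j, q i l j ≠ 0) →
    Module.finrank K
      (((⨆ j, segreTangent K n (p j)) ⊔ (⨆ i, ⨆ l, segreG K n (q i l) i))
        : Submodule K (⨂[K] i, (Fin (n i + 1) → K)))
      < min (s * (1 + ∑ i, n i) + ∑ i, a i * (n i + 1)) (∏ i, (n i + 1))

/-- The tuple `(n; s; a)` is subabundant. -/
def Subabundant {k : ℕ} (n : Fin k → ℕ) (s : ℕ) (a : Fin k → ℕ) : Prop :=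
  s * (1 + ∑ i, n i) + ∑ i, a i * (n i + 1) ≤ ∏ i, (n i + 1)

/-- The tuple `(n; s; a)` is superabundant. -/
def Superabundant {k : ℕ} (n : Fin k → ℕ) (s : ℕ) (a : Fin k → ℕ) : Prop :=
  ∏ i, (n i + 1) ≤ s * (1 + ∑ i, n i) + ∑ i, a i * (n i + 1)


section AuxSec
open PiTensorProduct
set_option linter.unusedSectionVars false
namespace AuxP1
variable {K : Type*} [Field K] [CharZero K] {n : ℕ}

abbrev nv (n : ℕ) : Fin 4 → ℕ := ![1, 1, n, n + 1]

def tup (a b : Fin 2 → K) (c : Fin (n + 1) → K) (d : Fin (n + 2) → K) :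
    ∀ i, Fin (nv n i + 1) → K :=
  Fin.cons a (Fin.cons b (Fin.cons c (Fin.cons d finZeroElim)))

noncomputable def T (a b : Fin 2 → K) (c : Fin (n + 1) → K) (d : Fin (n + 2) → K) :
    ⨂[K] i, (Fin (nv n i + 1) → K) :=
  tprod K (tup a b c d)

lemma upd0 (a b c d) (a' : Fin 2 → K) :
    Function.update (tup (n := n) (K := K) a b c d) 0 a' = tup a' b c d :=
  Fin.update_cons_zero ..

lemma upd1 (a b c d) (b' : Fin 2 → K) :
    Function.update (tup (n := n) (K := K) a b c d) 1 b' = tup a b' c d := by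
  unfold tup
  show Function.update _ (Fin.succ 0) _ = _
  funext i; fin_cases i <;> rfl

lemma upd2 (a b c d) (c' : Fin (n + 1) → K) :
    Function.update (tup (n := n) (K := K) a b c d) 2 c' = tup a b c' d := by
  unfold tup
  show Function.update _ (Fin.succ (Fin.succ 0)) _ = _
  funext i; fin_cases i <;> rfl

lemma upd3 (a b c d) (d' : Fin (n + 2) → K) :
    Function.update (tup (n := n) (K := K) a b c d) 3 d' = tup a b c d' := by
  unfold tup
  show Function.update _ (Fin.succ (Fin.succ (Fin.succ 0))) _ = _
  funext i; fin_cases i <;> rfl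

-- linearity lemmas
lemma T_add0 (a a' b c d) : T (n := n) (K := K) (a + a') b c d = T a b c d + T a' b c d := by
  unfold T
  erw [← upd0 a b c d (a + a'), MultilinearMap.map_update_add, upd0, upd0]

lemma T_smul0 (r : K) (a b c d) : T (n := n) (K := K) (r • a) b c d = r • T a b c d := by
  unfold T
  erw [← upd0 a b c d (r • a), MultilinearMap.map_update_smul, upd0]

lemma T_add1 (a b b' c d) : T (n := n) (K := K) a (b + b') c d = T a b c d + T a b' c d := by
  unfold T
  erw [← upd1 a b c d (b + b'), MultilinearMap.map_update_add, upd1, upd1]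

lemma T_smul1 (r : K) (a b c d) : T (n := n) (K := K) a (r • b) c d = r • T a b c d := by
  unfold T
  erw [← upd1 a b c d (r • b), MultilinearMap.map_update_smul, upd1]

lemma T_add2 (a b c c' d) : T (n := n) (K := K) a b (c + c') d = T a b c d + T a b c' d := by
  unfold T
  erw [← upd2 a b c d (c + c'), MultilinearMap.map_update_add, upd2, upd2]

lemma T_smul2 (r : K) (a b c d) : T (n := n) (K := K) a b (r • c) d = r • T a b c d := by
  unfold T
  erw [← upd2 a b c d (r • c), MultilinearMap.map_update_smul, upd2]

lemma T_add3 (a b c d d') : T (n := n) (K := K) a b c (d + d') = T a b c d + T a b c d' := by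
  unfold T
  erw [← upd3 a b c d (d + d'), MultilinearMap.map_update_add, upd3, upd3]

lemma T_smul3 (r : K) (a b c d) : T (n := n) (K := K) a b c (r • d) = r • T a b c d := by
  unfold T
  erw [← upd3 a b c d (r • d), MultilinearMap.map_update_smul, upd3]





def X0 : Fin 2 → K := ![1, 0]
def X1 : Fin 2 → K := ![0, 1]
noncomputable def yy (t : Fin (n + 1)) : Fin 2 → K := X0 + (t : K) • X1
noncomputable def zz (t : Fin (n + 1)) : Fin 2 → K := X0 + ((t : K) + 1) • X1
noncomputable def ee (i : Fin (n + 1)) : Fin (n + 1) → K := Pi.single i 1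
noncomputable def ff (j : Fin (n + 2)) : Fin (n + 2) → K := Pi.single j 1
noncomputable def uu (t : Fin (n + 1)) : Fin (n + 2) → K := ff t.castSucc + ff t.succ
noncomputable def vv (t : Fin (n + 1)) : Fin (n + 2) → K := ff t.castSucc + (2 : K) • ff t.succ

noncomputable def pts (n : ℕ) (j : Fin (2 * (n + 1))) : ∀ i, Fin (nv n i + 1) → K :=
  if h : j.1 < n + 1 then tup X0 (yy ⟨j.1, h⟩) (ee ⟨j.1, h⟩) (uu ⟨j.1, h⟩)
  else
    have h2 : j.1 - (n + 1) < n + 1 := by omega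
    tup X1 (zz ⟨j.1 - (n + 1), h2⟩) (ee ⟨j.1 - (n + 1), h2⟩) (vv ⟨j.1 - (n + 1), h2⟩)

noncomputable def SS (K : Type*) [Field K] (n : ℕ) :
    Submodule K (⨂[K] i, (Fin (nv n i + 1) → K)) :=
  ⨆ j, segreTangent K (nv n) (pts (K := K) n j)

lemma mem_gen (j : Fin (2 * (n + 1))) (i : Fin 4) (w : Fin (nv n i + 1) → K) :
    tprod K (Function.update (pts (K := K) n j) i w) ∈ SS K n := by
  refine Submodule.mem_iSup_of_mem j (Submodule.mem_iSup_of_mem i ?_)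
  exact ⟨w, rfl⟩

lemma ptsP (t : Fin (n + 1)) :
    pts (K := K) n ⟨t.1, by omega⟩ = tup X0 (yy t) (ee t) (uu t) := by
  have h : (t.1 : ℕ) < n + 1 := t.2
  rw [pts, dif_pos h]

lemma ptsQ (t : Fin (n + 1)) :
    pts (K := K) n ⟨n + 1 + t.1, by omega⟩ = tup X1 (zz t) (ee t) (vv t) := by
  have h : ¬ ((n + 1 + t.1 : ℕ) < n + 1) := by omega
  rw [pts, dif_neg h]
  have h3 : (⟨n + 1 + t.1 - (n + 1), by omega⟩ : Fin (n + 1)) = t := by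
    apply Fin.ext; simp
  simp only [Fin.val_mk, h3]

lemma gP0 (t : Fin (n + 1)) (w : Fin 2 → K) : T w (yy t) (ee t) (uu t) ∈ SS K n := by
  have := mem_gen (K := K) (n := n) ⟨t.1, by omega⟩ 0 w
  rwa [ptsP, upd0] at this

lemma gP1 (t : Fin (n + 1)) (w : Fin 2 → K) : T X0 w (ee t) (uu t) ∈ SS K n := by
  have := mem_gen (K := K) (n := n) ⟨t.1, by omega⟩ 1 w
  rwa [ptsP, upd1] at this

lemma gP2 (t : Fin (n + 1)) (w : Fin (n + 1) → K) : T X0 (yy t) w (uu t) ∈ SS K n := by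
  have := mem_gen (K := K) (n := n) ⟨t.1, by omega⟩ 2 w
  rwa [ptsP, upd2] at this

lemma gP3 (t : Fin (n + 1)) (w : Fin (n + 2) → K) : T X0 (yy t) (ee t) w ∈ SS K n := by
  have := mem_gen (K := K) (n := n) ⟨t.1, by omega⟩ 3 w
  rwa [ptsP, upd3] at this

lemma gQ0 (t : Fin (n + 1)) (w : Fin 2 → K) : T w (zz t) (ee t) (vv t) ∈ SS K n := by
  have := mem_gen (K := K) (n := n) ⟨n + 1 + t.1, by omega⟩ 0 w
  rwa [ptsQ, upd0] at this

lemma gQ1 (t : Fin (n + 1)) (w : Fin 2 → K) : T X1 w (ee t) (vv t) ∈ SS K n := by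
  have := mem_gen (K := K) (n := n) ⟨n + 1 + t.1, by omega⟩ 1 w
  rwa [ptsQ, upd1] at this

lemma gQ2 (t : Fin (n + 1)) (w : Fin (n + 1) → K) : T X1 (zz t) w (vv t) ∈ SS K n := by
  have := mem_gen (K := K) (n := n) ⟨n + 1 + t.1, by omega⟩ 2 w
  rwa [ptsQ, upd2] at this

lemma gQ3 (t : Fin (n + 1)) (w : Fin (n + 2) → K) : T X1 (zz t) (ee t) w ∈ SS K n := by
  have := mem_gen (K := K) (n := n) ⟨n + 1 + t.1, by omega⟩ 3 w
  rwa [ptsQ, upd3] at this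


-- expansion lemmas
lemma T_y (a : Fin 2 → K) (t : Fin (n + 1)) (c : Fin (n + 1) → K) (d : Fin (n + 2) → K) :
    T (n := n) a (yy t) c d = T a X0 c d + (t : K) • T a X1 c d := by
  rw [yy, T_add1, T_smul1]

lemma T_z (a : Fin 2 → K) (t : Fin (n + 1)) (c : Fin (n + 1) → K) (d : Fin (n + 2) → K) :
    T (n := n) a (zz t) c d = T a X0 c d + ((t : K) + 1) • T a X1 c d := by
  rw [zz, T_add1, T_smul1]

lemma T_u (a b : Fin 2 → K) (c : Fin (n + 1) → K) (t : Fin (n + 1)) :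
    T (n := n) a b c (uu t) = T a b c (ff t.castSucc) + T a b c (ff t.succ) := by
  rw [uu, T_add3]

lemma T_v (a b : Fin 2 → K) (c : Fin (n + 1) → K) (t : Fin (n + 1)) :
    T (n := n) a b c (vv t) = T a b c (ff t.castSucc) + (2 : K) • T a b c (ff t.succ) := by
  rw [vv, T_add3, T_smul3]

lemma T_sub3 (a b : Fin 2 → K) (c : Fin (n + 1) → K) (d d' : Fin (n + 2) → K) : T (n := n) (K := K) a b c (d - d') = T a b c d - T a b c d' := by
  unfold T
  erw [← upd3 a b c d (d - d'), (PiTensorProduct.tprod K).map_update_sub, upd3, upd3]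

lemma fin2_decomp (a : Fin 2 → K) : a = a 0 • X0 + a 1 • X1 := by
  funext m; fin_cases m <;> simp [X0, X1]

lemma T_a (a b : Fin 2 → K) (c : Fin (n + 1) → K) (d : Fin (n + 2) → K) :
    T (n := n) a b c d = a 0 • T X0 b c d + a 1 • T X1 b c d := by
  conv_lhs => rw [fin2_decomp a]
  rw [T_add0, T_smul0, T_smul0]

lemma T_b (a b : Fin 2 → K) (c : Fin (n + 1) → K) (d : Fin (n + 2) → K) :
    T (n := n) a b c d = b 0 • T a X0 c d + b 1 • T a X1 c d := by
  conv_lhs => rw [fin2_decomp b]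
  rw [T_add1, T_smul1, T_smul1]

lemma mem_all {c : Fin (n + 1) → K} {d : Fin (n + 2) → K}
    (h00 : T (n := n) X0 X0 c d ∈ SS K n) (h01 : T X0 X1 c d ∈ SS K n)
    (h10 : T X1 X0 c d ∈ SS K n) (h11 : T X1 X1 c d ∈ SS K n) :
    ∀ a b, T a b c d ∈ SS K n := by
  intro a b
  rw [T_a a b, T_b X0 b, T_b X1 b]
  exact add_mem
    (Submodule.smul_mem _ _ (add_mem (Submodule.smul_mem _ _ h00) (Submodule.smul_mem _ _ h01)))
    (Submodule.smul_mem _ _ (add_mem (Submodule.smul_mem _ _ h10) (Submodule.smul_mem _ _ h11)))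

-- extraction: same index t, from y and z versions
lemma extract_same {x : Fin 2 → K} {c : Fin (n + 1) → K} {d : Fin (n + 2) → K} (t : Fin (n + 1))
    (hy : T (n := n) x (yy t) c d ∈ SS K n) (hz : T x (zz t) c d ∈ SS K n) :
    T x X0 c d ∈ SS K n ∧ T x X1 c d ∈ SS K n := by
  have h1 : T x X1 c d ∈ SS K n := by
    have h := sub_mem hz hy
    rw [T_z, T_y] at h
    have heq : (T x X0 c d + ((t : K) + 1) • T x X1 c d)
        - (T x X0 c d + (t : K) • T x X1 c d) = T x X1 c d := by module
    rwa [heq] at h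
  have h0 : T x X0 c d ∈ SS K n := by
    have h := sub_mem hy (Submodule.smul_mem _ (t : K) h1)
    rw [T_y] at h
    have heq : (T x X0 c d + (t : K) • T x X1 c d) - (t : K) • T x X1 c d = T x X0 c d := by
      module
    rwa [heq] at h
  exact ⟨h0, h1⟩

-- extraction: different indices, y-version
lemma extract_y {x : Fin 2 → K} {c : Fin (n + 1) → K} {d : Fin (n + 2) → K} (i t : Fin (n + 1)) (hne : (t : ℕ) ≠ (i : ℕ))
    (hyt : T (n := n) x (yy t) c d ∈ SS K n) (hyi : T x (yy i) c d ∈ SS K n) :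
    T x X0 c d ∈ SS K n ∧ T x X1 c d ∈ SS K n := by
  have hδ : (t : K) - (i : K) ≠ 0 := sub_ne_zero.mpr (fun h => hne (Nat.cast_injective h))
  have h1 : T x X1 c d ∈ SS K n := by
    have h := Submodule.smul_mem _ ((t : K) - (i : K))⁻¹ (sub_mem hyt hyi)
    rw [T_y, T_y] at h
    have heq : (T x X0 c d + (t : K) • T x X1 c d)
        - (T x X0 c d + (i : K) • T x X1 c d) = ((t : K) - (i : K)) • T x X1 c d := by
      module
    rw [heq, smul_smul, inv_mul_cancel₀ hδ, one_smul] at h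
    exact h
  have h0 : T x X0 c d ∈ SS K n := by
    have h := sub_mem hyt (Submodule.smul_mem _ (t : K) h1)
    rw [T_y] at h
    have heq : (T x X0 c d + (t : K) • T x X1 c d) - (t : K) • T x X1 c d = T x X0 c d := by
      module
    rwa [heq] at h
  exact ⟨h0, h1⟩

-- extraction: different indices, z-version
lemma extract_z {x : Fin 2 → K} {c : Fin (n + 1) → K} {d : Fin (n + 2) → K} (i t : Fin (n + 1)) (hne : (t : ℕ) ≠ (i : ℕ))
    (hzt : T (n := n) x (zz t) c d ∈ SS K n) (hzi : T x (zz i) c d ∈ SS K n) :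
    T x X0 c d ∈ SS K n ∧ T x X1 c d ∈ SS K n := by
  have hδ : (t : K) - (i : K) ≠ 0 := sub_ne_zero.mpr (fun h => hne (Nat.cast_injective h))
  have h1 : T x X1 c d ∈ SS K n := by
    have h := Submodule.smul_mem _ ((t : K) - (i : K))⁻¹ (sub_mem hzt hzi)
    rw [T_z, T_z] at h
    have heq : (T x X0 c d + ((t : K) + 1) • T x X1 c d)
        - (T x X0 c d + ((i : K) + 1) • T x X1 c d) = ((t : K) - (i : K)) • T x X1 c d := by
      module
    rw [heq, smul_smul, inv_mul_cancel₀ hδ, one_smul] at h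
    exact h
  have h0 : T x X0 c d ∈ SS K n := by
    have h := sub_mem hzt (Submodule.smul_mem _ ((t : K) + 1) h1)
    rw [T_z] at h
    have heq : (T x X0 c d + ((t : K) + 1) • T x X1 c d) - ((t : K) + 1) • T x X1 c d
        = T x X0 c d := by module
    rwa [heq] at h
  exact ⟨h0, h1⟩

-- base lemmas
lemma baseU (t : Fin (n + 1)) : ∀ a b, T (n := n) a b (ee t) (uu t) ∈ SS K n := by
  have hx1 := extract_same (K := K) (n := n) (x := X1) t (gP0 t X1) (gQ3 t (uu t))
  exact mem_all (gP1 t X0) (gP1 t X1) hx1.1 hx1.2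

lemma baseV (t : Fin (n + 1)) : ∀ a b, T (n := n) a b (ee t) (vv t) ∈ SS K n := by
  have hx0 := extract_same (K := K) (n := n) (x := X0) t (gP3 t (vv t)) (gQ0 t X0)
  exact mem_all hx0.1 hx0.2 (gQ1 t X0) (gQ1 t X1)

lemma ff_cs (t : Fin (n + 1)) : ff (K := K) t.castSucc = (2 : K) • uu t - vv t := by
  unfold uu vv; module

lemma ff_s (t : Fin (n + 1)) : ff (K := K) t.succ = vv t - uu t := by
  unfold uu vv; module

lemma baseCS (t : Fin (n + 1)) : ∀ a b, T (n := n) a b (ee t) (ff t.castSucc) ∈ SS K n := by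
  intro a b
  rw [ff_cs, T_sub3, T_smul3]
  exact sub_mem (Submodule.smul_mem _ _ (baseU t a b)) (baseV t a b)

lemma baseS (t : Fin (n + 1)) : ∀ a b, T (n := n) a b (ee t) (ff t.succ) ∈ SS K n := by
  intro a b
  rw [ff_s, T_sub3]
  exact sub_mem (baseV t a b) (baseU t a b)
lemma key (i t : Fin (n + 1)) (hne : (t : ℕ) ≠ (i : ℕ)) (d : Fin (n + 2) → K)
    (h1 : T (n := n) X0 (yy t) (ee i) d ∈ SS K n) (h2 : T X1 (zz t) (ee i) d ∈ SS K n) :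
    ∀ a b, T a b (ee i) d ∈ SS K n := by
  have hx0 := extract_y (K := K) (n := n) (x := X0) i t hne h1 (gP3 i d)
  have hx1 := extract_z (K := K) (n := n) (x := X1) i t hne h2 (gQ3 i d)
  exact mem_all hx0.1 hx0.2 hx1.1 hx1.2

lemma upH1 (i t : Fin (n + 1))
    (IH : ∀ a b, T (n := n) a b (ee i) (ff t.castSucc) ∈ SS K n) :
    T (n := n) X0 (yy t) (ee i) (ff t.succ) ∈ SS K n := by
  have h := sub_mem (gP2 t (ee i)) (IH X0 (yy t))
  rw [T_u, add_sub_cancel_left] at h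
  exact h

lemma upH2 (i t : Fin (n + 1))
    (IH : ∀ a b, T (n := n) a b (ee i) (ff t.castSucc) ∈ SS K n) :
    T (n := n) X1 (zz t) (ee i) (ff t.succ) ∈ SS K n := by
  have h := sub_mem (gQ2 t (ee i)) (IH X1 (zz t))
  rw [T_v, add_sub_cancel_left] at h
  have h2 := Submodule.smul_mem _ ((2 : K)⁻¹) h
  rwa [smul_smul, inv_mul_cancel₀ two_ne_zero, one_smul] at h2

lemma downH1 (i t : Fin (n + 1))
    (IH : ∀ a b, T (n := n) a b (ee i) (ff t.succ) ∈ SS K n) :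
    T (n := n) X0 (yy t) (ee i) (ff t.castSucc) ∈ SS K n := by
  have h := sub_mem (gP2 t (ee i)) (IH X0 (yy t))
  rw [T_u, add_sub_cancel_right] at h
  exact h

lemma downH2 (i t : Fin (n + 1))
    (IH : ∀ a b, T (n := n) a b (ee i) (ff t.succ) ∈ SS K n) :
    T (n := n) X1 (zz t) (ee i) (ff t.castSucc) ∈ SS K n := by
  have h := sub_mem (gQ2 t (ee i)) (Submodule.smul_mem _ (2 : K) (IH X1 (zz t)))
  rw [T_v, add_sub_cancel_right] at h
  exact h

lemma up (m : ℕ) : ∀ (i : Fin (n + 1)) (jd : Fin (n + 2)), i.1 + 1 + m = jd.1 →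
    ∀ a b, T (n := n) a b (ee i) (ff jd) ∈ SS K n := by
  induction m with
  | zero =>
    intro i jd h
    have hjd : jd = i.succ := by apply Fin.ext; rw [Fin.val_succ]; omega
    rw [hjd]; exact baseS i
  | succ m ih =>
    intro i jd h
    have htn : jd.1 - 1 < n + 1 := by omega
    have hsucc : (⟨jd.1 - 1, htn⟩ : Fin (n + 1)).succ = jd := by
      apply Fin.ext; simp only [Fin.val_succ, Fin.val_mk]; omega
    have IH : ∀ a b, T (n := n) a b (ee i) (ff (⟨jd.1 - 1, htn⟩ : Fin (n + 1)).castSucc)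
        ∈ SS K n := ih i (⟨jd.1 - 1, htn⟩ : Fin (n + 1)).castSucc (by
      simp only [Fin.coe_castSucc, Fin.val_mk]; omega)
    have hne : ((⟨jd.1 - 1, htn⟩ : Fin (n + 1)) : ℕ) ≠ (i : ℕ) := by
      simp only [Fin.val_mk]; omega
    have hk := key i ⟨jd.1 - 1, htn⟩ hne (ff (⟨jd.1 - 1, htn⟩ : Fin (n + 1)).succ)
      (upH1 i _ IH) (upH2 i _ IH)
    rw [hsucc] at hk
    exact hk

lemma down (m : ℕ) : ∀ (i : Fin (n + 1)) (jd : Fin (n + 2)), jd.1 + m = i.1 →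
    ∀ a b, T (n := n) a b (ee i) (ff jd) ∈ SS K n := by
  induction m with
  | zero =>
    intro i jd h
    have hjd : jd = i.castSucc := by apply Fin.ext; rw [Fin.coe_castSucc]; omega
    rw [hjd]; exact baseCS i
  | succ m ih =>
    intro i jd h
    have htn : jd.1 < n + 1 := by omega
    have hcs : (⟨jd.1, htn⟩ : Fin (n + 1)).castSucc = jd := by
      apply Fin.ext; rw [Fin.coe_castSucc]
    have IH : ∀ a b, T (n := n) a b (ee i) (ff (⟨jd.1, htn⟩ : Fin (n + 1)).succ)
        ∈ SS K n := ih i (⟨jd.1, htn⟩ : Fin (n + 1)).succ (by simp only [Fin.val_succ, Fin.val_mk]; omega)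
    have hne : ((⟨jd.1, htn⟩ : Fin (n + 1)) : ℕ) ≠ (i : ℕ) := by
      simp only [Fin.val_mk]; omega
    have hk := key i ⟨jd.1, htn⟩ hne (ff (⟨jd.1, htn⟩ : Fin (n + 1)).castSucc)
      (downH1 i _ IH) (downH2 i _ IH)
    rw [hcs] at hk
    exact hk

lemma Phi (i : Fin (n + 1)) (jd : Fin (n + 2)) :
    ∀ a b, T (n := n) a b (ee i) (ff jd) ∈ SS K n := by
  rcases le_or_gt jd.1 i.1 with h | h
  · exact down (i.1 - jd.1) i jd (by omega)
  · exact up (jd.1 - i.1 - 1) i jd (by omega)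

lemma tup_single (g : ∀ i : Fin 4, Fin (nv n i + 1)) :
    (fun i => Pi.single (g i) (1 : K)) = tup (Pi.single (g 0) 1) (Pi.single (g 1) 1)
      (Pi.single (g 2) 1) (Pi.single (g 3) 1) := by
  funext i
  fin_cases i <;> rfl

lemma basis_mem (g : ∀ i : Fin 4, Fin (nv n i + 1)) :
    PiTensorProduct.tprod K (fun i => Pi.single (g i) (1 : K)) ∈ SS K n := by
  rw [tup_single]
  exact Phi (g 2) (g 3) (Pi.single (g 0) 1) (Pi.single (g 1) 1)

lemma SS_top : SS K n = ⊤ := by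
  rw [eq_top_iff, ← PiTensorProduct.span_tprod_eq_top, Submodule.span_le]
  rintro x ⟨v, rfl⟩
  have hv : v = fun i => ∑ m : Fin (nv n i + 1), v i m • (Pi.single m (1 : K) : Fin (nv n i + 1) → K) := by
    funext i m
    rw [Finset.sum_apply]
    simp [Pi.single_apply]
  rw [hv, MultilinearMap.map_sum]
  refine Submodule.sum_mem _ fun r _ => ?_
  rw [MultilinearMap.map_smul_univ]
  exact Submodule.smul_mem _ _ (basis_mem r)
lemma comp_ne_zero {a b : Fin 2 → K} {c : Fin (n + 1) → K} {d : Fin (n + 2) → K}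
    (ha : a ≠ 0) (hb : b ≠ 0) (hc : c ≠ 0) (hd : d ≠ 0) (i : Fin 4) :
    tup a b c d i ≠ 0 := by
  fin_cases i
  exacts [ha, hb, hc, hd]

lemma X0_ne : (X0 : Fin 2 → K) ≠ 0 := by
  intro h; have := congrFun h 0; simp [X0] at this

lemma X1_ne : (X1 : Fin 2 → K) ≠ 0 := by
  intro h; have := congrFun h 1; simp [X1] at this

lemma yy_ne (t : Fin (n + 1)) : (yy t : Fin 2 → K) ≠ 0 := by
  intro h; have := congrFun h 0; simp [yy, X0, X1] at this

lemma zz_ne (t : Fin (n + 1)) : (zz t : Fin 2 → K) ≠ 0 := by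
  intro h; have := congrFun h 0; simp [zz, X0, X1] at this

lemma ee_ne (t : Fin (n + 1)) : (ee t : Fin (n + 1) → K) ≠ 0 := by
  intro h; have := congrFun h t; simp [ee] at this

lemma uu_ne (t : Fin (n + 1)) : (uu t : Fin (n + 2) → K) ≠ 0 := by
  intro h
  have := congrFun h t.castSucc
  have hne : t.castSucc ≠ t.succ := (Fin.castSucc_lt_succ (i := t)).ne
  simp [uu, ff, Pi.single_eq_same, Pi.single_eq_of_ne hne] at this

lemma vv_ne (t : Fin (n + 1)) : (vv t : Fin (n + 2) → K) ≠ 0 := by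
  intro h
  have := congrFun h t.castSucc
  have hne : t.castSucc ≠ t.succ := (Fin.castSucc_lt_succ (i := t)).ne
  simp [vv, ff, Pi.single_eq_same, Pi.single_eq_of_ne hne] at this

lemma pts_ne_zero (j : Fin (2 * (n + 1))) (i : Fin 4) : pts (K := K) n j i ≠ 0 := by
  rw [pts]
  split
  · exact comp_ne_zero X0_ne (yy_ne _) (ee_ne _) (uu_ne _) i
  · exact comp_ne_zero X1_ne (zz_ne _) (ee_ne _) (vv_ne _) i

end AuxP1
end AuxSec
/-- For every `n ≥ 1` the Segre variety `P¹ × P¹ × Pⁿ × P^{n+1}` is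
perfect for `s = 2(n+1)`: the tuple `(1,1,n,n+1; 2(n+1); 0,0,0,0)` is equiabundant,
i.e. `2(n+1)(1 + Σᵢ nᵢ) = Πᵢ(nᵢ+1) = 4(n+1)(n+2)`, and there exist `2(n+1)` points
whose tangent spaces span the whole tensor space. -/
theorem P1P1PnPn1_perfect
    (K : Type*) [Field K] [CharZero K] (n : ℕ) (hn : 1 ≤ n) :
    (2 * (n + 1)) * (1 + ∑ i, ![1, 1, n, n + 1] i)
        = ∏ i, (![1, 1, n, n + 1] i + 1) ∧
    ∏ i, (![1, 1, n, n + 1] i + 1) = 4 * (n + 1) * (n + 2) ∧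
    ∃ p : Fin (2 * (n + 1)) → ∀ i, Fin (![1, 1, n, n + 1] i + 1) → K,
      (∀ j i, p j i ≠ 0) ∧
      (⨆ j, segreTangent K ![1, 1, n, n + 1] (p j))
        = (⊤ : Submodule K (⨂[K] i, (Fin (![1, 1, n, n + 1] i + 1) → K))) := by
  refine ⟨?_, ?_, AuxP1.pts n, AuxP1.pts_ne_zero, AuxP1.SS_top⟩
  · simp [Fin.sum_univ_four, Fin.prod_univ_four]; try ring
  · simp [Fin.prod_univ_four]; try ring
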